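/- Let ε, σ : R →+* ℤ be the ring homomorphisms determined by ε(T) = 1 and σ(T) = −1, applied entrywise to elements of R² = (Fin 2 → R). Let λ be the hyperbolic form over R on R², λ x y = x 0 * y 1 + x 1 * y 0, and let H be the hyperbolic form over ℤ on ℤ². Then for all x, y ∈ R²: 2 • λ x y = (1 + T) * ι (H (ε ∘ x) (ε ∘ y)) + (1 − T) * ι (H (σ ∘ x) (σ ∘ y)). (This expresses that the pullback of the hyperbolic forms H(ℤ₊) and H(ℤ₋) is the hyperbolic form H(ℤ[ℤ₂]).) -/

import Mathlib

/-- The group ring `R = ℤ[ℤ₂]`. -/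
abbrev Rg : Type := MonoidAlgebra ℤ (Multiplicative (ZMod 2))

/-- The generator `T ∈ R` of `ℤ₂` (so `T² = 1`). -/
noncomputable def Tg : Rg := MonoidAlgebra.of ℤ (Multiplicative (ZMod 2)) (Multiplicative.ofAdd 1)

lemma Tg_sq : Tg * Tg = 1 := by
  have : Tg * Tg = MonoidAlgebra.of ℤ (Multiplicative (ZMod 2))
      (Multiplicative.ofAdd 1 * Multiplicative.ofAdd 1) := (map_mul _ _ _).symm
  rw [this]
  rw [show (Multiplicative.ofAdd 1 * Multiplicative.ofAdd 1 : Multiplicative (ZMod 2)) = 1 by decide]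
  exact (map_one _)

lemma key (φ : Rg →+* ℤ) (u : Rg) (hu : u * algebraMap ℤ Rg (φ Tg) = u * Tg)
    (a : Rg) : u * algebraMap ℤ Rg (φ a) = u * a := by
  induction a using MonoidAlgebra.induction_on with
  | of g =>
    rcases (by decide : ∀ h : Multiplicative (ZMod 2), h = 1 ∨ h = Multiplicative.ofAdd 1) g
      with h | h
    · subst h
      rw [map_one, map_one, mul_one, map_one, mul_one]
    · subst h
      exact hu
  | add f g hf hg => rw [map_add, map_add, mul_add, hf, hg, mul_add]
  | smul r f hf =>
    rw [map_zsmul, map_zsmul, mul_smul_comm, hf, mul_smul_comm]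

/-- with `ε, σ : R →+* ℤ` the ring homomorphisms determined by `ε T = 1`
and `σ T = -1`, the hyperbolic form `λ` over `R = ℤ[ℤ₂]` on `R²` satisfies
`2 • λ x y = (1 + T) * ι (H (ε ∘ x) (ε ∘ y)) + (1 - T) * ι (H (σ ∘ x) (σ ∘ y))`:
the pullback of the hyperbolic forms `H(ℤ₊)` and `H(ℤ₋)` is the hyperbolic form
`H(ℤ[ℤ₂])`. -/
theorem stmt6 (ε σ : Rg →+* ℤ) (hε : ε Tg = 1) (hσ : σ Tg = -1)
    (x y : Fin 2 → Rg) :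
    2 • (x 0 * y 1 + x 1 * y 0)
      = (1 + Tg) * algebraMap ℤ Rg (ε (x 0) * ε (y 1) + ε (x 1) * ε (y 0))
      + (1 - Tg) * algebraMap ℤ Rg (σ (x 0) * σ (y 1) + σ (x 1) * σ (y 0)) := by
  have hεu : (1 + Tg) * algebraMap ℤ Rg (ε Tg) = (1 + Tg) * Tg := by
    rw [hε, map_one, mul_one]
    linear_combination -Tg_sq
  have hσu : (1 - Tg) * algebraMap ℤ Rg (σ Tg) = (1 - Tg) * Tg := by
    rw [hσ, map_neg, map_one]
    linear_combination Tg_sq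
  have kε := key ε (1 + Tg) hεu
  have kσ := key σ (1 - Tg) hσu
  have prodε : ∀ a b : Rg, (1 + Tg) * algebraMap ℤ Rg (ε a * ε b) = (1 + Tg) * (a * b) := by
    intro a b
    rw [map_mul]
    calc (1 + Tg) * (algebraMap ℤ Rg (ε a) * algebraMap ℤ Rg (ε b))
        = ((1 + Tg) * algebraMap ℤ Rg (ε a)) * algebraMap ℤ Rg (ε b) := by ring
      _ = ((1 + Tg) * algebraMap ℤ Rg (ε b)) * a := by rw [kε]; ring
      _ = (1 + Tg) * (a * b) := by rw [kε]; ring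
  have prodσ : ∀ a b : Rg, (1 - Tg) * algebraMap ℤ Rg (σ a * σ b) = (1 - Tg) * (a * b) := by
    intro a b
    rw [map_mul]
    calc (1 - Tg) * (algebraMap ℤ Rg (σ a) * algebraMap ℤ Rg (σ b))
        = ((1 - Tg) * algebraMap ℤ Rg (σ a)) * algebraMap ℤ Rg (σ b) := by ring
      _ = ((1 - Tg) * algebraMap ℤ Rg (σ b)) * a := by rw [kσ]; ring
      _ = (1 - Tg) * (a * b) := by rw [kσ]; ring
  rw [map_add, map_add, mul_add, mul_add, prodε, prodε, prodσ, prodσ]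
  ring
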